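/- arXiv:1704.05562 — 4 statements merged into one kernel-verified Lean document; each statement's English description precedes it below -/
import Mathlib

section
/- The matrix logarithm is operator monotone: if A and B are positive definite matrices with A ≤ B, then log A ≤ log B. -/
open Matrix
open scoped ComplexOrder

/-- Matrix logarithm via the Hermitian functional calculus, with the convention
`Real.log 0 = 0` on the kernel (junk value `0` for non-Hermitian input). -/
noncomputable def mlog {n : ℕ} (A : Matrix (Fin n) (Fin n) ℂ) : Matrix (Fin n) (Fin n) ℂ :=
  if h : A.IsHermitian then h.cfc Real.log else 0

/-- Umegaki relative entropy `S(ρ,σ) = Tr(ρ (log ρ - log σ))` (real part of the trace). -/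
noncomputable def relEnt {n : ℕ} (ρ σ : Matrix (Fin n) (Fin n) ℂ) : ℝ :=
  ((ρ * (mlog ρ - mlog σ)).trace).re

/-- The support condition `supp ρ ≤ supp σ`, phrased as kernel containment
(`ker σ ⊆ ker ρ`), which is equivalent for positive semidefinite matrices. -/
def suppLE {n : ℕ} (ρ σ : Matrix (Fin n) (Fin n) ℂ) : Prop :=
  ∀ v : Fin n → ℂ, σ.mulVec v = 0 → ρ.mulVec v = 0

-- The L2 operator norm makes square complex matrices a C⋆-algebra, and `MatrixOrder` is the
-- Loewner order `A ≤ B ↔ (B - A).PosSemidef`; this is the setting of `CFC.log_le_log`.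
open scoped MatrixOrder Matrix.Norms.L2Operator

lemma mlog_eq_log {n : ℕ} {A : Matrix (Fin n) (Fin n) ℂ} (hA : A.IsHermitian) :
    mlog A = CFC.log A := by
  rw [mlog, dif_pos hA, CFC.log, hA.cfc_eq]

theorem stmt2_general {n : ℕ} (A B : Matrix (Fin n) (Fin n) ℂ)
    (hA : A.PosDef) (hAB : (B - A).PosSemidef) :
    (mlog B - mlog A).PosSemidef := by
  have hB : B.PosDef := (hA.isStrictlyPositive.of_le hAB).posDef
  rw [mlog_eq_log hA.1, mlog_eq_log hB.1]
  exact CFC.log_le_log hAB hA.isStrictlyPositive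

/-- Operator monotonicity of the matrix logarithm: if A, B are positive
definite and A ≤ B, then log A ≤ log B. -/
theorem stmt2 {n : ℕ} (A B : Matrix (Fin n) (Fin n) ℂ)
    (hA : A.PosDef) (hB : B.PosDef) (hAB : (B - A).PosSemidef) :
    (mlog B - mlog A).PosSemidef :=
  stmt2_general A B hA hAB
end

section
/- Let E : M → N be a linear map between two finite-dimensional C*-algebras with N ⊆ M, satisfying E(X) ≥ λX for all positive X ∈ M and some λ > 0. Then for any density matrix (state) ρ on M with S(ρ, ρ∘E) < ∞, the relative entropy satisfies S(ρ, ρ∘E) ≤ log(1/λ). -/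
open Matrix
open scoped ComplexOrder

/-!
Testing the bound `E X ≥ λ X` on rank-one projections `X = x x*` and dualising against `ρ` gives
`σ ≥ λ ρ`. Diagonalising `ρ = ∑ pᵢ vᵢ vᵢ*`, one has `S(ρ, σ) = ∑ pᵢ (log pᵢ - ⟨vᵢ, log σ vᵢ⟩)`
and `σ ≥ λ pᵢ vᵢ vᵢ*`, so it suffices that `a v v* ≤ σ` for a unit vector `v` forces
`log a ≤ ⟨v, log σ v⟩`. In an eigenbasis `(u_j, q_j)` of `σ` put `c_j = |⟨u_j, v⟩|²`. Testing
`a v v* ≤ σ` on `u_j` shows `c_j = 0` whenever `q_j = 0`, so the convention `log 0 = 0` never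
matters; testing it on `σ⁻¹ v` (pseudo-inverse) bounds the harmonic mean: `∑ c_j / q_j ≤ 1 / a`.
Concavity of `log` turns this into `log a ≤ ∑ c_j log q_j = ⟨v, log σ v⟩`.
-/

theorem mlog_of_isHermitian {n : ℕ} {A : Matrix (Fin n) (Fin n) ℂ} (hA : A.IsHermitian) :
    mlog A = hA.cfc Real.log :=
  dif_pos hA

theorem Real.log_le_sum_mul_log_of_forall_sq_le {ι : Type*} [Fintype ι] {a : ℝ} {c q : ι → ℝ}
    (ha : 0 < a) (hc : ∀ j, 0 ≤ c j) (hc1 : ∑ j, c j = 1)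
    (h : ∀ s : ι → ℝ, a * (∑ j, c j * s j) ^ 2 ≤ ∑ j, q j * c j * s j ^ 2) :
    Real.log a ≤ ∑ j, c j * Real.log (q j) := by
  classical
  have hq : ∀ j, 0 < c j → 0 < q j := fun j hcj => by
    have := h (Pi.single j 1)
    simp only [Pi.single_apply, mul_ite, mul_one, mul_zero, Finset.sum_ite_eq', Finset.mem_univ,
      if_true, ite_pow, one_pow, zero_pow two_ne_zero] at this
    nlinarith [mul_pos ha (pow_pos hcj 2)]
  have hterm : ∀ j, 0 ≤ c j / q j := fun j => by
    rcases (hc j).eq_or_lt with hcj | hcj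
    · simp [← hcj]
    · exact (div_pos hcj (hq j hcj)).le
  set t := ∑ j, c j / q j
  have ht_le : a * t ^ 2 ≤ t := by
    convert h fun j => (q j)⁻¹ using 2
    · simp only [t, div_eq_mul_inv]
    · rename_i j _
      rcases eq_or_ne (q j) 0 with hqj | hqj
      · simp [hqj]
      · field_simp
  have ht_pos : 0 < t := by
    obtain ⟨j, -, hcj⟩ : ∃ j ∈ Finset.univ, 0 < c j :=
      Finset.exists_lt_of_sum_lt (by simp [hc1] : ∑ j, (0 : ℝ) < ∑ j, c j)
    exact lt_of_lt_of_le (div_pos hcj (hq j hcj))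
      (Finset.single_le_sum (fun j _ => hterm j) (Finset.mem_univ j))
  have hat : Real.log a + Real.log t ≤ 0 := by
    rw [← Real.log_mul ha.ne' ht_pos.ne']
    exact Real.log_nonpos (by positivity) (by nlinarith)
  -- `log x ≤ x - 1` at `x = (q j * t)⁻¹`
  have hjensen : ∀ j, c j * -Real.log t ≤ c j * Real.log (q j) + c j / q j / t - c j := fun j => by
    rcases (hc j).eq_or_lt with hcj | hcj
    · simp [← hcj]
    have hqj := hq j hcj
    have := Real.log_le_sub_one_of_pos (inv_pos.mpr (mul_pos hqj ht_pos))
    rw [Real.log_inv, Real.log_mul hqj.ne' ht_pos.ne'] at this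
    have := mul_le_mul_of_nonneg_left this hcj.le
    field_simp at this ⊢
    linarith
  have := Finset.sum_le_sum fun j (_ : j ∈ Finset.univ) => hjensen j
  rw [← Finset.sum_mul, hc1, Finset.sum_sub_distrib, Finset.sum_add_distrib, ← Finset.sum_div,
    div_self ht_pos.ne', hc1] at this
  linarith

namespace Matrix

variable {n : Type*} [Fintype n]

theorem posSemidef_of_forall_dotProduct_mulVec_nonneg [DecidableEq n] {A : Matrix n n ℂ}
    (h : ∀ x, 0 ≤ star x ⬝ᵥ A *ᵥ x) : A.PosSemidef := by
  rw [← isPositive_toEuclideanLin_iff, LinearMap.isPositive_iff_complex]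
  intro x
  obtain ⟨hre, him⟩ := Complex.nonneg_iff.mp (h x.ofLp)
  simp only [EuclideanSpace.inner_eq_star_dotProduct, toLpLin_apply, dotProduct_star,
    dotProduct_comm (A *ᵥ _), Complex.star_def]
  exact ⟨Complex.ext (by simp) (by simp [← him]), hre⟩

theorem PosSemidef.trace_mul_nonneg {A B : Matrix n n ℂ} (hA : A.PosSemidef)
    (hB : B.PosSemidef) : 0 ≤ (A * B).trace := by
  obtain ⟨k, v, rfl⟩ := posSemidef_iff_eq_sum_vecMulVec.mp hA
  rw [Finset.sum_mul, trace_sum]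
  refine Finset.sum_nonneg fun i _ => ?_
  rw [vecMulVec_mul, trace_vecMulVec, dotProduct_comm, ← dotProduct_mulVec]
  exact hB.dotProduct_mulVec_nonneg (v i)

theorem dotProduct_mulVec_eq_trace_mul_vecMulVec (A : Matrix n n ℂ) (x : n → ℂ) :
    star x ⬝ᵥ A *ᵥ x = (A * vecMulVec x (star x)).trace := by
  rw [trace_mul_comm, vecMulVec_mul, trace_vecMulVec, dotProduct_comm x, ← dotProduct_mulVec]

namespace IsHermitian

variable [DecidableEq n] {A : Matrix n n ℂ} (hA : A.IsHermitian)
include hA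

theorem cfc_id : hA.cfc id = A := hA.spectral_theorem.symm

theorem re_dotProduct_cfc_mulVec (f : ℝ → ℝ) (x : n → ℂ) :
    (star x ⬝ᵥ hA.cfc f *ᵥ x).re = ∑ k, f (hA.eigenvalues k) *
      Complex.normSq ((star (hA.eigenvectorUnitary : Matrix n n ℂ) *ᵥ x) k) := by
  have hstar : star x ᵥ* (hA.eigenvectorUnitary : Matrix n n ℂ) =
      star (star (hA.eigenvectorUnitary : Matrix n n ℂ) *ᵥ x) := by
    rw [star_mulVec, star_eq_conjTranspose, conjTranspose_conjTranspose]
  rw [IsHermitian.cfc, Unitary.conjStarAlgAut_apply, ← mulVec_mulVec, ← mulVec_mulVec,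
    dotProduct_mulVec, hstar]
  simp only [mulVec_diagonal, dotProduct, Complex.re_sum, Function.comp_apply, Pi.star_apply]
  refine Finset.sum_congr rfl fun k _ => ?_
  rw [mul_left_comm, Complex.star_def, ← Complex.normSq_eq_conj_mul_self]
  exact Complex.re_ofReal_mul _ _

theorem re_dotProduct_mulVec (x : n → ℂ) :
    (star x ⬝ᵥ A *ᵥ x).re = ∑ k, hA.eigenvalues k *
      Complex.normSq ((star (hA.eigenvectorUnitary : Matrix n n ℂ) *ᵥ x) k) := by
  conv_lhs => rw [← hA.cfc_id]
  exact hA.re_dotProduct_cfc_mulVec id x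

theorem trace_mul_eq_sum_eigenvalues (M : Matrix n n ℂ) :
    (A * M).trace = ∑ i, (hA.eigenvalues i : ℂ) *
      (star ⇑(hA.eigenvectorBasis i) ⬝ᵥ M *ᵥ ⇑(hA.eigenvectorBasis i)) := by
  conv_lhs => rw [hA.spectral_theorem, Unitary.conjStarAlgAut_apply]
  simp only [mul_assoc]
  rw [trace_mul_comm, mul_assoc, trace]
  refine Finset.sum_congr rfl fun i _ => ?_
  rw [diag_apply, diagonal_mul]
  simp only [mul_apply, star_apply, eigenvectorUnitary_apply, dotProduct, Pi.star_apply, mulVec,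
    Finset.mul_sum, Finset.sum_mul, mul_assoc, Function.comp_apply, Complex.coe_algebraMap]
  rw [Finset.sum_comm]

theorem star_eigenvectorUnitary_mulVec_apply (x : n → ℂ) (i : n) :
    (star (hA.eigenvectorUnitary : Matrix n n ℂ) *ᵥ x) i =
      star ⇑(hA.eigenvectorBasis i) ⬝ᵥ x := by
  simp [mulVec, dotProduct, star_apply]

theorem star_eigenvectorBasis_dotProduct_self (i : n) :
    star ⇑(hA.eigenvectorBasis i) ⬝ᵥ ⇑(hA.eigenvectorBasis i) = 1 := by
  rw [← star_eigenvectorUnitary_mulVec_apply, star_eigenvectorUnitary_mulVec, Pi.single_eq_same]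

theorem re_dotProduct_cfc_mulVec_eigenvectorBasis (f : ℝ → ℝ) (i : n) :
    (star ⇑(hA.eigenvectorBasis i) ⬝ᵥ hA.cfc f *ᵥ ⇑(hA.eigenvectorBasis i)).re =
      f (hA.eigenvalues i) := by
  rw [re_dotProduct_cfc_mulVec, star_eigenvectorUnitary_mulVec]
  simp [Pi.single_apply]

theorem log_le_re_dotProduct_cfc_log_mulVec {a : ℝ} {v : n → ℂ} (ha : 0 < a)
    (hv : star v ⬝ᵥ v = 1)
    (h : ∀ x, a * Complex.normSq (star v ⬝ᵥ x) ≤ (star x ⬝ᵥ A *ᵥ x).re) :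
    Real.log a ≤ (star v ⬝ᵥ hA.cfc Real.log *ᵥ v).re := by
  set U := (hA.eigenvectorUnitary : Matrix n n ℂ)
  set b := star U *ᵥ v
  have hUU : star U * U = 1 := Unitary.star_mul_self_of_mem hA.eigenvectorUnitary.2
  have hUU' : U * star U = 1 := Unitary.mul_star_self_of_mem hA.eigenvectorUnitary.2
  have hb : ∀ y, star b ⬝ᵥ y = star v ⬝ᵥ U *ᵥ y := fun y => by
    rw [dotProduct_mulVec, star_mulVec, star_eq_conjTranspose, conjTranspose_conjTranspose]
  have hb_mul : ∀ s : n → ℝ, star b ⬝ᵥ (fun j => b j * s j) =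
      ((∑ j, Complex.normSq (b j) * s j : ℝ) : ℂ) := fun s => by
    push_cast
    simp only [dotProduct, Pi.star_apply, Complex.normSq_eq_conj_mul_self, ← mul_assoc]
    rfl
  rw [hA.re_dotProduct_cfc_mulVec]
  simp_rw [mul_comm (Real.log _)]
  refine Real.log_le_sum_mul_log_of_forall_sq_le ha (fun j => Complex.normSq_nonneg _) ?_
    fun s => ?_
  · have := hb_mul 1
    simp only [Pi.one_apply, Complex.ofReal_one, mul_one] at this
    rw [hb, mulVec_mulVec, hUU', one_mulVec, hv] at this
    exact_mod_cast this.symm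
  · have := h (U *ᵥ fun j => b j * s j)
    rw [← hb, hb_mul, hA.re_dotProduct_mulVec, mulVec_mulVec, hUU, one_mulVec,
      Complex.normSq_ofReal] at this
    simpa [Complex.normSq_mul, Complex.normSq_ofReal, sq, mul_assoc] using this

end IsHermitian

theorem PosSemidef.eigenvalues_mul_normSq_le_re_dotProduct_mulVec [DecidableEq n]
    {A : Matrix n n ℂ} (hA : A.PosSemidef) (x : n → ℂ) (i : n) :
    hA.1.eigenvalues i * Complex.normSq (star ⇑(hA.1.eigenvectorBasis i) ⬝ᵥ x) ≤
      (star x ⬝ᵥ A *ᵥ x).re := by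
  rw [hA.1.re_dotProduct_mulVec, ← hA.1.star_eigenvectorUnitary_mulVec_apply]
  exact Finset.single_le_sum (f := fun k => hA.1.eigenvalues k * Complex.normSq _)
    (fun k _ => mul_nonneg (hA.eigenvalues_nonneg k) (Complex.normSq_nonneg _))
    (Finset.mem_univ i)

end Matrix

theorem relEnt_eq_sum_eigenvalues {n : ℕ} {ρ : Matrix (Fin n) (Fin n) ℂ} (hρ : ρ.IsHermitian)
    (σ : Matrix (Fin n) (Fin n) ℂ) :
    relEnt ρ σ = ∑ i, hρ.eigenvalues i * (Real.log (hρ.eigenvalues i) -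
      (star ⇑(hρ.eigenvectorBasis i) ⬝ᵥ mlog σ *ᵥ ⇑(hρ.eigenvectorBasis i)).re) := by
  rw [relEnt, hρ.trace_mul_eq_sum_eigenvalues, Complex.re_sum]
  refine Finset.sum_congr rfl fun i _ => ?_
  rw [sub_mulVec, dotProduct_sub, Complex.re_ofReal_mul, Complex.sub_re, mlog_of_isHermitian hρ,
    hρ.re_dotProduct_cfc_mulVec_eigenvectorBasis]

theorem relEnt_le_neg_log_of_posSemidef_sub_smul {n : ℕ} {ρ σ : Matrix (Fin n) (Fin n) ℂ}
    {lam : ℝ} (hρ : ρ.PosSemidef) (hρtr : ρ.trace = 1) (hlam : 0 < lam)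
    (hσρ : (σ - (lam : ℂ) • ρ).PosSemidef) :
    relEnt ρ σ ≤ -Real.log lam := by
  have hσ : σ.IsHermitian := by
    simpa using hσρ.1.add (hρ.smul (Complex.zero_le_real.mpr hlam.le)).1
  set p := hρ.1.eigenvalues
  set v := fun i => ⇑(hρ.1.eigenvectorBasis i)
  have hbound : ∀ i, 0 < p i → Real.log (lam * p i) ≤ (star (v i) ⬝ᵥ mlog σ *ᵥ v i).re := by
    intro i hpi
    rw [mlog_of_isHermitian hσ]
    refine hσ.log_le_re_dotProduct_cfc_log_mulVec (mul_pos hlam hpi)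
      (hρ.1.star_eigenvectorBasis_dotProduct_self i) fun x => ?_
    have hσx : lam * (star x ⬝ᵥ ρ *ᵥ x).re ≤ (star x ⬝ᵥ σ *ᵥ x).re := by
      have := hσρ.re_dotProduct_nonneg x
      rw [sub_mulVec, smul_mulVec, dotProduct_sub, dotProduct_smul] at this
      simp only [RCLike.re_to_complex, Complex.sub_re, smul_eq_mul, Complex.re_ofReal_mul] at this
      linarith
    rw [mul_assoc]
    exact (mul_le_mul_of_nonneg_left
      (hρ.eigenvalues_mul_normSq_le_re_dotProduct_mulVec x i) hlam.le).trans hσx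
  have hpsum : ∑ i, p i = 1 := by
    have : ρ.trace = ∑ i, (p i : ℂ) := hρ.1.trace_eq_sum_eigenvalues
    rw [hρtr] at this
    exact_mod_cast this.symm
  calc relEnt ρ σ = ∑ i, p i * (Real.log (p i) - (star (v i) ⬝ᵥ mlog σ *ᵥ v i).re) :=
        relEnt_eq_sum_eigenvalues hρ.1 σ
    _ ≤ ∑ i, p i * -Real.log lam := Finset.sum_le_sum fun i _ => by
      rcases (hρ.eigenvalues_nonneg i).eq_or_lt with hpi | hpi
      · simp [p, ← hpi]
      · have := hbound i hpi
        rw [Real.log_mul hlam.ne' hpi.ne'] at this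
        exact mul_le_mul_of_nonneg_left (by linarith) hpi.le
    _ = -Real.log lam := by rw [← Finset.sum_mul, hpsum, one_mul]

theorem stmt6_general {m : ℕ}
    (E : Matrix (Fin m) (Fin m) ℂ →ₗ[ℂ] Matrix (Fin m) (Fin m) ℂ)
    (lam : ℝ) (hlam : 0 < lam)
    (hpp : ∀ X : Matrix (Fin m) (Fin m) ℂ, X.PosSemidef →
      (E X - (lam : ℂ) • X).PosSemidef)
    (ρ σ : Matrix (Fin m) (Fin m) ℂ)
    (hρ : ρ.PosSemidef) (hρtr : ρ.trace = 1)
    (hσ : ∀ X, (σ * X).trace = (ρ * E X).trace) :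
    relEnt ρ σ ≤ Real.log (1 / lam) := by
  have hσρ : (σ - (lam : ℂ) • ρ).PosSemidef :=
    posSemidef_of_forall_dotProduct_mulVec_nonneg fun x => by
      rw [dotProduct_mulVec_eq_trace_mul_vecMulVec, sub_mul, trace_sub, hσ, smul_mul,
        ← Matrix.mul_smul, ← trace_sub, ← mul_sub]
      exact hρ.trace_mul_nonneg (hpp _ (posSemidef_vecMulVec_self_star x))
  rw [one_div, Real.log_inv]
  exact relEnt_le_neg_log_of_posSemidef_sub_smul hρ hρtr hlam hσρ

/-- if E : M → N is a positive unital map between finite-dimensional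
C*-algebras (modelled as a matrix algebra M with a star-subalgebra N) satisfying the
Pimsner–Popa bound E(X) ≥ λX for positive X and some λ > 0, then for any state ρ with
S(ρ, ρ∘E) < ∞ one has S(ρ, ρ∘E) ≤ log(1/λ).  Here σ is the density matrix of the state
ρ∘E, i.e. Tr(σX) = Tr(ρ·E(X)) for all X, and finiteness of S(ρ, ρ∘E) is the support
condition supp ρ ≤ supp σ. -/
theorem stmt6 {m : ℕ} (N : StarSubalgebra ℂ (Matrix (Fin m) (Fin m) ℂ))
    (E : Matrix (Fin m) (Fin m) ℂ →ₗ[ℂ] Matrix (Fin m) (Fin m) ℂ)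
    (hrange : ∀ X, E X ∈ N)
    (hunital : E 1 = 1)
    (hpos : ∀ X : Matrix (Fin m) (Fin m) ℂ, X.PosSemidef → (E X).PosSemidef)
    (lam : ℝ) (hlam : 0 < lam)
    (hpp : ∀ X : Matrix (Fin m) (Fin m) ℂ, X.PosSemidef →
      (E X - (lam : ℂ) • X).PosSemidef)
    (ρ σ : Matrix (Fin m) (Fin m) ℂ)
    (hρ : ρ.PosSemidef) (hρtr : ρ.trace = 1)
    (hσ : ∀ X, (σ * X).trace = (ρ * E X).trace)
    (hfin : suppLE ρ σ) :
    relEnt ρ σ ≤ Real.log (1 / lam) :=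
  stmt6_general E lam hlam hpp ρ σ hρ hρtr hσ
end

section
/- Monotonicity in the second argument: for density matrices ρ and positive operators σ₁ ≤ σ₂ on a finite-dimensional Hilbert space with supp(ρ) ≤ supp(σ₁), we have S(ρ, σ₂) ≤ S(ρ, σ₁). -/
open Matrix
open scoped ComplexOrder

/-!
For `ε > 0` the matrices `σᵢ + ε` are strictly positive with `σ₁ + ε ≤ σ₂ + ε`, so operator
monotonicity of the logarithm and positivity of `ρ` give `Tr ρ log (σ₁ + ε) ≤ Tr ρ log (σ₂ + ε)`.
Let `ε → 0`. In an eigenbasis `(vⱼ, λⱼ)` of `σ` one has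
`Tr ρ log (σ + ε) = ∑ⱼ ⟨vⱼ, ρ vⱼ⟩ log (λⱼ + ε)`; the terms with `λⱼ = 0`, the only ones that
diverge, vanish because `ker σ ⊆ ker ρ`, so the limit is `Tr ρ log σ` with `log 0 = 0` on `ker σ`.
-/

open Filter Topology
open scoped Matrix.Norms.L2Operator MatrixOrder

section

variable {ι : Type*} [Fintype ι] [DecidableEq ι]

lemma re_trace_mul_le_of_nonneg {A B C : Matrix ι ι ℂ} (hA : 0 ≤ A) (hBC : B ≤ C) :
    (A * B).trace.re ≤ (A * C).trace.re := by
  obtain ⟨E, rfl⟩ := CStarAlgebra.nonneg_iff_eq_star_mul_self.mp hA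
  have hconj : 0 ≤ E * (C - B) * star E := star_right_conjugate_nonneg (sub_nonneg.mpr hBC) E
  have htr : (star E * E * (C - B)).trace = (E * (C - B) * star E).trace := by
    rw [mul_assoc, trace_mul_comm, mul_assoc]
  have := (Complex.nonneg_iff.mp hconj.posSemidef.trace_nonneg).1
  rw [← htr, mul_sub, trace_sub, Complex.sub_re] at this
  linarith

lemma trace_mul_cfc {A : Matrix ι ι ℂ} (hA : A.IsHermitian) (B : Matrix ι ι ℂ) (f : ℝ → ℝ) :
    (B * cfc f A).trace = ∑ j, (star (hA.eigenvectorUnitary : Matrix ι ι ℂ) * B *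
      hA.eigenvectorUnitary) j j * f (hA.eigenvalues j) := by
  rw [hA.cfc_eq, IsHermitian.cfc, Unitary.conjStarAlgAut_apply, ← mul_assoc, ← mul_assoc,
    trace_mul_cycle, ← mul_assoc]
  simp only [trace, diag, mul_diagonal, Function.comp_apply]
  rfl

lemma log_add_algebraMap {A : Matrix ι ι ℂ} (hA : A.IsHermitian) (ε : ℝ) :
    CFC.log (A + algebraMap ℝ _ ε) = cfc (fun x => Real.log (x + ε)) A := by
  have hfin := Matrix.finite_real_spectrum (A := A)
  rw [cfc_comp' Real.log (· + ε) A ((hfin.image _).continuousOn _) (hfin.continuousOn _)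
    hA.isSelfAdjoint, cfc_add_const ε (fun x => x) A (hfin.continuousOn _) hA.isSelfAdjoint,
    cfc_id' ℝ A]
  rfl

end

section

variable {n : ℕ}

lemma mlog_eq_cfc {A : Matrix (Fin n) (Fin n) ℂ} (hA : A.IsHermitian) :
    mlog A = cfc Real.log A := by
  rw [mlog, dif_pos hA, hA.cfc_eq]

lemma suppLE.mono_right {ρ σ₁ σ₂ : Matrix (Fin n) (Fin n) ℂ} (hsupp : suppLE ρ σ₁)
    (hσ₁ : σ₁.PosSemidef) (hle : (σ₂ - σ₁).PosSemidef) : suppLE ρ σ₂ := by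
  intro v hv
  apply hsupp
  have hle' := hle.dotProduct_mulVec_nonneg v
  rw [sub_mulVec, dotProduct_sub, hv, dotProduct_zero, zero_sub, neg_nonneg] at hle'
  exact (hσ₁.dotProduct_mulVec_zero_iff v).mp (le_antisymm hle' (hσ₁.dotProduct_mulVec_nonneg v))

lemma conj_eigenvectorUnitary_apply_eq_zero {ρ σ : Matrix (Fin n) (Fin n) ℂ}
    (hσ : σ.IsHermitian) (hsupp : suppLE ρ σ) {j : Fin n} (hj : hσ.eigenvalues j = 0) :
    (star (hσ.eigenvectorUnitary : Matrix (Fin n) (Fin n) ℂ) * ρ * hσ.eigenvectorUnitary) j j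
      = 0 := by
  set U : Matrix (Fin n) (Fin n) ℂ := ↑hσ.eigenvectorUnitary
  have hker : σ *ᵥ ⇑(hσ.eigenvectorBasis j) = 0 := by
    rw [hσ.mulVec_eigenvectorBasis, hj, zero_smul]
  have hcol : (ρ * U) *ᵥ Pi.single j 1 = 0 := by
    rw [← mulVec_mulVec, hσ.eigenvectorUnitary_mulVec, hsupp _ hker]
  calc (star U * ρ * U) j j = ((star U * ρ * U) *ᵥ Pi.single j 1) j := by
        rw [mulVec_single_one]; rfl
    _ = 0 := by rw [mul_assoc, ← mulVec_mulVec, hcol, mulVec_zero]; rfl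

lemma tendsto_re_trace_mul_log_add {ρ σ : Matrix (Fin n) (Fin n) ℂ}
    (hσ : σ.IsHermitian) (hsupp : suppLE ρ σ) :
    Tendsto (fun ε : ℝ => (ρ * CFC.log (σ + algebraMap ℝ _ ε)).trace.re) (𝓝[>] 0)
      (𝓝 (ρ * mlog σ).trace.re) := by
  simp only [log_add_algebraMap hσ, mlog_eq_cfc hσ, trace_mul_cfc hσ, Complex.re_sum,
    Complex.re_mul_ofReal]
  refine tendsto_finsetSum _ fun j _ => ?_
  by_cases hj : hσ.eigenvalues j = 0
  · simp [conj_eigenvectorUnitary_apply_eq_zero hσ hsupp hj]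
  · have hshift : Tendsto (fun ε : ℝ => hσ.eigenvalues j + ε) (𝓝[>] 0) (𝓝 (hσ.eigenvalues j)) :=
      ((continuous_const_add _).tendsto' 0 _ (add_zero _)).mono_left nhdsWithin_le_nhds
    exact ((Real.continuousAt_log hj).tendsto.comp hshift).const_mul _

end

theorem stmt9_general {n : ℕ} (ρ σ₁ σ₂ : Matrix (Fin n) (Fin n) ℂ)
    (hρ : ρ.PosSemidef)
    (hσ₁ : σ₁.PosSemidef) (hσ₂ : σ₂.PosSemidef)
    (hle : (σ₂ - σ₁).PosSemidef)
    (hsupp : suppLE ρ σ₁) :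
    relEnt ρ σ₂ ≤ relEnt ρ σ₁ := by
  suffices (ρ * mlog σ₁).trace.re ≤ (ρ * mlog σ₂).trace.re by
    simp only [relEnt, mul_sub, trace_sub, Complex.sub_re]
    linarith
  refine le_of_tendsto_of_tendsto (tendsto_re_trace_mul_log_add hσ₁.1 hsupp)
    (tendsto_re_trace_mul_log_add hσ₂.1 (hsupp.mono_right hσ₁ hle)) ?_
  filter_upwards [self_mem_nhdsWithin] with ε (hε : 0 < ε)
  refine re_trace_mul_le_of_nonneg hρ.nonneg (CFC.log_le_log ?_ ?_)
  · exact add_le_add_left (le_iff.mpr hle) _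
  · exact IsStrictlyPositive.nonneg_add hσ₁.nonneg (isStrictlyPositive_algebraMap hε)

/-- monotonicity in the second argument: for a density matrix ρ and positive
operators σ₁ ≤ σ₂ with supp ρ ≤ supp σ₁, one has S(ρ, σ₂) ≤ S(ρ, σ₁). -/
theorem stmt9 {n : ℕ} (ρ σ₁ σ₂ : Matrix (Fin n) (Fin n) ℂ)
    (hρ : ρ.PosSemidef) (htr : ρ.trace = 1)
    (hσ₁ : σ₁.PosSemidef) (hσ₂ : σ₂.PosSemidef)
    (hle : (σ₂ - σ₁).PosSemidef)
    (hsupp : suppLE ρ σ₁) :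
    relEnt ρ σ₂ ≤ relEnt ρ σ₁ :=
  stmt9_general ρ σ₁ σ₂ hρ hσ₁ hσ₂ hle hsupp
end

section
/- If E₁ : M₁ → N₁ and E₂ : M₂ → N₂ are conditional expectations between finite-dimensional C*-algebras satisfying Pimsner-Popa bounds Eᵢ(X) ≥ λᵢX for all positive X, then E₁⊗E₂ : M₁⊗M₂ → N₁⊗N₂ is a conditional expectation satisfying (E₁⊗E₂)(Y) ≥ λ₁λ₂·Y for all positive Y ∈ M₁⊗M₂. -/
open Matrix
open scoped ComplexOrder

open Kronecker

/-- The amplification of a linear map on Mₐ(ℂ) to Mₐ(ℂ) ⊗ Mᵣ(ℂ), acting as E ⊗ id. -/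
noncomputable def amp {a : ℕ}
    (E : Matrix (Fin a) (Fin a) ℂ →ₗ[ℂ] Matrix (Fin a) (Fin a) ℂ) (r : ℕ)
    (M : Matrix (Fin a × Fin r) (Fin a × Fin r) ℂ) :
    Matrix (Fin a × Fin r) (Fin a × Fin r) ℂ :=
  fun p q => E (fun i j => M (i, p.2) (j, q.2)) p.1 q.1

/-- Complete positivity of a linear map on a matrix algebra. -/
def IsCP {a : ℕ}
    (E : Matrix (Fin a) (Fin a) ℂ →ₗ[ℂ] Matrix (Fin a) (Fin a) ℂ) : Prop :=
  ∀ (r : ℕ) (M : Matrix (Fin a × Fin r) (Fin a × Fin r) ℂ),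
    M.PosSemidef → (amp E r M).PosSemidef

/-! Both `E12` and `(E₁ ⊗ id) ∘ (id ⊗ E₂)` are linear and agree on Kronecker products, which span,
so they coincide. With `Z = (id ⊗ E₂) Y` this gives
`(E₁ ⊗ E₂) Y - λ₁λ₂ Y = ((E₁ - λ₁ id) ⊗ id) Z + λ₁ (id ⊗ (E₂ - λ₂ id)) Y`,
a sum of positive matrices since `Z ≥ 0` and the gaps are completely positive. -/

theorem Matrix.kronecker_linearMap_ext {R M l m n p : Type*} [CommSemiring R] [AddCommMonoid M]
    [Module R M] [Fintype l] [Fintype m] [Fintype n] [Fintype p]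
    [DecidableEq l] [DecidableEq m] [DecidableEq n] [DecidableEq p]
    {f g : Matrix (l × n) (m × p) R →ₗ[R] M}
    (h : ∀ (A : Matrix l m R) (B : Matrix n p R), f (A ⊗ₖ B) = g (A ⊗ₖ B)) : f = g := by
  ext1 X
  rw [matrix_eq_sum_single X]
  simp only [map_sum]
  refine Finset.sum_congr rfl fun i _ => Finset.sum_congr rfl fun j _ => ?_
  rw [← mul_one (X i j), ← single_kronecker_single, h]

theorem Matrix.map_kronecker_mul_mul_kronecker {R m n : Type*} [CommSemiring R]
    [Fintype m] [Fintype n] [DecidableEq m] [DecidableEq n]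
    {E₁ : Matrix m m R →ₗ[R] Matrix m m R} {E₂ : Matrix n n R →ₗ[R] Matrix n n R}
    {E12 : Matrix (m × n) (m × n) R →ₗ[R] Matrix (m × n) (m × n) R}
    (hE12 : ∀ A B, E12 (A ⊗ₖ B) = E₁ A ⊗ₖ E₂ B) {C₁ D₁ : Matrix m m R} {C₂ D₂ : Matrix n n R}
    (h₁ : ∀ X, E₁ (C₁ * X * D₁) = C₁ * E₁ X * D₁) (h₂ : ∀ X, E₂ (C₂ * X * D₂) = C₂ * E₂ X * D₂)
    (Y : Matrix (m × n) (m × n) R) :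
    E12 ((C₁ ⊗ₖ C₂) * Y * (D₁ ⊗ₖ D₂)) = (C₁ ⊗ₖ C₂) * E12 Y * (D₁ ⊗ₖ D₂) := by
  have hcomp : E12 ∘ₗ LinearMap.mulRight R (D₁ ⊗ₖ D₂) ∘ₗ LinearMap.mulLeft R (C₁ ⊗ₖ C₂) =
      LinearMap.mulRight R (D₁ ⊗ₖ D₂) ∘ₗ LinearMap.mulLeft R (C₁ ⊗ₖ C₂) ∘ₗ E12 :=
    kronecker_linearMap_ext fun A B => by
      simp only [LinearMap.comp_apply, LinearMap.mulLeft_apply, LinearMap.mulRight_apply]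
      rw [← mul_kronecker_mul, ← mul_kronecker_mul, hE12, hE12, h₁, h₂, mul_kronecker_mul,
        mul_kronecker_mul]
  exact LinearMap.congr_fun hcomp Y

section Amplification

variable {a b : ℕ}

noncomputable def ampₗ (E : Matrix (Fin a) (Fin a) ℂ →ₗ[ℂ] Matrix (Fin a) (Fin a) ℂ) (r : ℕ) :
    Matrix (Fin a × Fin r) (Fin a × Fin r) ℂ →ₗ[ℂ] Matrix (Fin a × Fin r) (Fin a × Fin r) ℂ where
  toFun := amp E r
  map_add' M N := funext₂ fun p q => congrFun₂ (map_add E (fun i j => M (i, p.2) (j, q.2))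
    (fun i j => N (i, p.2) (j, q.2))) p.1 q.1
  map_smul' c M := funext₂ fun p q => congrFun₂ (map_smul E c (fun i j => M (i, p.2) (j, q.2)))
    p.1 q.1

theorem amp_sub_smul_id (E : Matrix (Fin a) (Fin a) ℂ →ₗ[ℂ] Matrix (Fin a) (Fin a) ℂ)
    (c : ℂ) (r : ℕ) (M : Matrix (Fin a × Fin r) (Fin a × Fin r) ℂ) :
    amp (E - c • LinearMap.id) r M = amp E r M - c • M :=
  rfl

theorem amp_kronecker (E : Matrix (Fin a) (Fin a) ℂ →ₗ[ℂ] Matrix (Fin a) (Fin a) ℂ)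
    (A : Matrix (Fin a) (Fin a) ℂ) (B : Matrix (Fin b) (Fin b) ℂ) :
    amp E b (A ⊗ₖ B) = E A ⊗ₖ B := by
  ext p q
  have hslice : (fun i j => (A ⊗ₖ B) (i, p.2) (j, q.2)) = B p.2 q.2 • A := by
    ext i j
    simp [mul_comm]
  change E _ p.1 q.1 = _
  rw [hslice, map_smul]
  simp [mul_comm]

noncomputable def ampRight (E : Matrix (Fin b) (Fin b) ℂ →ₗ[ℂ] Matrix (Fin b) (Fin b) ℂ) (a : ℕ)
    (M : Matrix (Fin a × Fin b) (Fin a × Fin b) ℂ) :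
    Matrix (Fin a × Fin b) (Fin a × Fin b) ℂ :=
  (amp E a (M.submatrix Prod.swap Prod.swap)).submatrix Prod.swap Prod.swap

theorem ampRight_apply (E : Matrix (Fin b) (Fin b) ℂ →ₗ[ℂ] Matrix (Fin b) (Fin b) ℂ)
    (M : Matrix (Fin a × Fin b) (Fin a × Fin b) ℂ) (p q : Fin a × Fin b) :
    ampRight E a M p q = E (fun k l => M (p.1, k) (q.1, l)) p.2 q.2 :=
  rfl

noncomputable def ampRightₗ (E : Matrix (Fin b) (Fin b) ℂ →ₗ[ℂ] Matrix (Fin b) (Fin b) ℂ)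
    (a : ℕ) :
    Matrix (Fin a × Fin b) (Fin a × Fin b) ℂ →ₗ[ℂ] Matrix (Fin a × Fin b) (Fin a × Fin b) ℂ where
  toFun := ampRight E a
  map_add' M N := funext₂ fun p q => congrFun₂ (map_add E (fun k l => M (p.1, k) (q.1, l))
    (fun k l => N (p.1, k) (q.1, l))) p.2 q.2
  map_smul' c M := funext₂ fun p q => congrFun₂ (map_smul E c (fun k l => M (p.1, k) (q.1, l)))
    p.2 q.2

theorem ampRight_sub_smul_id (E : Matrix (Fin b) (Fin b) ℂ →ₗ[ℂ] Matrix (Fin b) (Fin b) ℂ)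
    (c : ℂ) (M : Matrix (Fin a × Fin b) (Fin a × Fin b) ℂ) :
    ampRight (E - c • LinearMap.id) a M = ampRight E a M - c • M :=
  rfl

theorem ampRight_kronecker (E : Matrix (Fin b) (Fin b) ℂ →ₗ[ℂ] Matrix (Fin b) (Fin b) ℂ)
    (A : Matrix (Fin a) (Fin a) ℂ) (B : Matrix (Fin b) (Fin b) ℂ) :
    ampRight E a (A ⊗ₖ B) = A ⊗ₖ E B := by
  ext p q
  have hslice : (fun k l => (A ⊗ₖ B) (p.1, k) (q.1, l)) = A p.1 q.1 • B := by
    ext k l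
    simp
  rw [ampRight_apply, hslice, map_smul]
  simp

theorem IsCP.ampRight_posSemidef {E : Matrix (Fin b) (Fin b) ℂ →ₗ[ℂ] Matrix (Fin b) (Fin b) ℂ}
    (hE : IsCP E) {M : Matrix (Fin a × Fin b) (Fin a × Fin b) ℂ} (hM : M.PosSemidef) :
    (ampRight E a M).PosSemidef :=
  (hE a _ (hM.submatrix Prod.swap)).submatrix Prod.swap

end Amplification

theorem eq_amp_ampRight_of_map_kronecker {a b : ℕ}
    {E₁ : Matrix (Fin a) (Fin a) ℂ →ₗ[ℂ] Matrix (Fin a) (Fin a) ℂ}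
    {E₂ : Matrix (Fin b) (Fin b) ℂ →ₗ[ℂ] Matrix (Fin b) (Fin b) ℂ}
    {E12 : Matrix (Fin a × Fin b) (Fin a × Fin b) ℂ →ₗ[ℂ] Matrix (Fin a × Fin b) (Fin a × Fin b) ℂ}
    (hE12 : ∀ A B, E12 (A ⊗ₖ B) = E₁ A ⊗ₖ E₂ B) (M : Matrix (Fin a × Fin b) (Fin a × Fin b) ℂ) :
    E12 M = amp E₁ b (ampRight E₂ a M) := by
  have hcomp : E12 = ampₗ E₁ b ∘ₗ ampRightₗ E₂ a := kronecker_linearMap_ext fun A B => by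
    change _ = amp E₁ b (ampRight E₂ a (A ⊗ₖ B))
    rw [hE12, ampRight_kronecker, amp_kronecker]
  exact LinearMap.congr_fun hcomp M

theorem amp_ampRight_sub_smul_posSemidef {a b : ℕ}
    {E₁ : Matrix (Fin a) (Fin a) ℂ →ₗ[ℂ] Matrix (Fin a) (Fin a) ℂ}
    {E₂ : Matrix (Fin b) (Fin b) ℂ →ₗ[ℂ] Matrix (Fin b) (Fin b) ℂ} {c₁ c₂ : ℂ}
    (h₁ : IsCP (E₁ - c₁ • LinearMap.id)) (hE₂ : IsCP E₂) (h₂ : IsCP (E₂ - c₂ • LinearMap.id))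
    (hc₁ : 0 ≤ c₁) {Y : Matrix (Fin a × Fin b) (Fin a × Fin b) ℂ} (hY : Y.PosSemidef) :
    (amp E₁ b (ampRight E₂ a Y) - (c₁ * c₂) • Y).PosSemidef := by
  set Z := ampRight E₂ a Y
  have hgap₁ : (amp E₁ b Z - c₁ • Z).PosSemidef := by
    simpa only [amp_sub_smul_id] using h₁ b Z (hE₂.ampRight_posSemidef hY)
  have hgap₂ : (Z - c₂ • Y).PosSemidef := by
    simpa only [ampRight_sub_smul_id] using h₂.ampRight_posSemidef hY
  have hsplit : amp E₁ b Z - (c₁ * c₂) • Y = (amp E₁ b Z - c₁ • Z) + c₁ • (Z - c₂ • Y) := by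
    module
  rw [hsplit]
  exact hgap₁.add (hgap₂.smul hc₁)

theorem stmt17_general {a b : ℕ}
    (N₁ : StarSubalgebra ℂ (Matrix (Fin a) (Fin a) ℂ))
    (N₂ : StarSubalgebra ℂ (Matrix (Fin b) (Fin b) ℂ))
    (E₁ : Matrix (Fin a) (Fin a) ℂ →ₗ[ℂ] Matrix (Fin a) (Fin a) ℂ)
    (E₂ : Matrix (Fin b) (Fin b) ℂ →ₗ[ℂ] Matrix (Fin b) (Fin b) ℂ)
    -- E₁, E₂ are conditional expectations onto N₁, N₂:
    (h1one : E₁ 1 = 1) (h2one : E₂ 1 = 1)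
    (h1fix : ∀ Y ∈ N₁, E₁ Y = Y) (h2fix : ∀ Y ∈ N₂, E₂ Y = Y)
    (h1bimod : ∀ A ∈ N₁, ∀ B ∈ N₁, ∀ X, E₁ (A * X * B) = A * E₁ X * B)
    (h2bimod : ∀ A ∈ N₂, ∀ B ∈ N₂, ∀ X, E₂ (A * X * B) = A * E₂ X * B)
    (h1cp : IsCP E₁) (h2cp : IsCP E₂)
    -- Pimsner–Popa bounds, with completely positive gaps Eᵢ − λᵢ·id:
    (lam₁ lam₂ : ℝ) (hl₁ : 0 < lam₁)
    (h1gap : IsCP (E₁ - (lam₁ : ℂ) • LinearMap.id))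
    (h2gap : IsCP (E₂ - (lam₂ : ℂ) • LinearMap.id))
    -- the tensor product map E₁⊗E₂:
    (E12 : Matrix (Fin a × Fin b) (Fin a × Fin b) ℂ →ₗ[ℂ]
      Matrix (Fin a × Fin b) (Fin a × Fin b) ℂ)
    (hE12 : ∀ (A : Matrix (Fin a) (Fin a) ℂ) (B : Matrix (Fin b) (Fin b) ℂ),
      E12 (A ⊗ₖ B) = (E₁ A) ⊗ₖ (E₂ B)) :
    -- E₁⊗E₂ is a conditional expectation:
    (E12 1 = 1) ∧
    (∀ Y : Matrix (Fin a × Fin b) (Fin a × Fin b) ℂ, Y.PosSemidef → (E12 Y).PosSemidef) ∧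
    (∀ C₁ ∈ N₁, ∀ C₂ ∈ N₂, ∀ D₁ ∈ N₁, ∀ D₂ ∈ N₂,
      ∀ Y : Matrix (Fin a × Fin b) (Fin a × Fin b) ℂ,
      E12 ((C₁ ⊗ₖ C₂) * Y * (D₁ ⊗ₖ D₂)) = (C₁ ⊗ₖ C₂) * E12 Y * (D₁ ⊗ₖ D₂)) ∧
    (∀ Y ∈ Set.range (fun p : N₁ × N₂ => (p.1 : Matrix (Fin a) (Fin a) ℂ) ⊗ₖ (p.2 : Matrix (Fin b) (Fin b) ℂ)), E12 Y = Y) ∧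
    -- the Pimsner–Popa bound with constant λ₁λ₂:
    (∀ Y : Matrix (Fin a × Fin b) (Fin a × Fin b) ℂ, Y.PosSemidef →
      (E12 Y - ((lam₁ * lam₂ : ℝ) : ℂ) • Y).PosSemidef) := by
  have hfactor := eq_amp_ampRight_of_map_kronecker hE12
  refine ⟨?_, fun Y hY => ?_, fun C₁ hC₁ C₂ hC₂ D₁ hD₁ D₂ hD₂ =>
    map_kronecker_mul_mul_kronecker hE12 (h1bimod C₁ hC₁ D₁ hD₁) (h2bimod C₂ hC₂ D₂ hD₂), ?_,
    fun Y hY => ?_⟩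
  · rw [← one_kronecker_one, hE12, h1one, h2one]
  · rw [hfactor]
    exact h1cp b _ (h2cp.ampRight_posSemidef hY)
  · rintro _ ⟨⟨X₁, X₂⟩, rfl⟩
    exact (hE12 _ _).trans (by rw [h1fix _ X₁.2, h2fix _ X₂.2])
  · rw [hfactor, Complex.ofReal_mul]
    exact amp_ampRight_sub_smul_posSemidef h1gap h2cp h2gap (Complex.zero_le_real.2 hl₁.le) hY

/-- if E₁ : M₁ → N₁ and E₂ : M₂ → N₂ are conditional expectations between
finite-dimensional C*-algebras (Mᵢ matrix algebras, Nᵢ star-subalgebras) satisfying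
Pimsner–Popa bounds Eᵢ(X) ≥ λᵢX (with Eᵢ and Eᵢ − λᵢ·id completely positive), then
E₁⊗E₂ : M₁⊗M₂ → N₁⊗N₂ (determined on Kronecker products by
(E₁⊗E₂)(A ⊗ₖ B) = E₁(A) ⊗ₖ E₂(B)) is a conditional expectation satisfying
(E₁⊗E₂)(Y) ≥ λ₁λ₂·Y for all positive Y. -/
theorem stmt17 {a b : ℕ}
    (N₁ : StarSubalgebra ℂ (Matrix (Fin a) (Fin a) ℂ))
    (N₂ : StarSubalgebra ℂ (Matrix (Fin b) (Fin b) ℂ))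
    (E₁ : Matrix (Fin a) (Fin a) ℂ →ₗ[ℂ] Matrix (Fin a) (Fin a) ℂ)
    (E₂ : Matrix (Fin b) (Fin b) ℂ →ₗ[ℂ] Matrix (Fin b) (Fin b) ℂ)
    -- E₁, E₂ are conditional expectations onto N₁, N₂:
    (h1one : E₁ 1 = 1) (h2one : E₂ 1 = 1)
    (h1range : ∀ X, E₁ X ∈ N₁) (h2range : ∀ X, E₂ X ∈ N₂)
    (h1fix : ∀ Y ∈ N₁, E₁ Y = Y) (h2fix : ∀ Y ∈ N₂, E₂ Y = Y)
    (h1bimod : ∀ A ∈ N₁, ∀ B ∈ N₁, ∀ X, E₁ (A * X * B) = A * E₁ X * B)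
    (h2bimod : ∀ A ∈ N₂, ∀ B ∈ N₂, ∀ X, E₂ (A * X * B) = A * E₂ X * B)
    (h1cp : IsCP E₁) (h2cp : IsCP E₂)
    -- Pimsner–Popa bounds, with completely positive gaps Eᵢ − λᵢ·id:
    (lam₁ lam₂ : ℝ) (hl₁ : 0 < lam₁) (hl₂ : 0 < lam₂)
    (h1gap : IsCP (E₁ - (lam₁ : ℂ) • LinearMap.id))
    (h2gap : IsCP (E₂ - (lam₂ : ℂ) • LinearMap.id))
    (h1pp : ∀ X : Matrix (Fin a) (Fin a) ℂ, X.PosSemidef →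
      (E₁ X - (lam₁ : ℂ) • X).PosSemidef)
    (h2pp : ∀ X : Matrix (Fin b) (Fin b) ℂ, X.PosSemidef →
      (E₂ X - (lam₂ : ℂ) • X).PosSemidef)
    -- the tensor product map E₁⊗E₂:
    (E12 : Matrix (Fin a × Fin b) (Fin a × Fin b) ℂ →ₗ[ℂ]
      Matrix (Fin a × Fin b) (Fin a × Fin b) ℂ)
    (hE12 : ∀ (A : Matrix (Fin a) (Fin a) ℂ) (B : Matrix (Fin b) (Fin b) ℂ),
      E12 (A ⊗ₖ B) = (E₁ A) ⊗ₖ (E₂ B)) :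
    -- E₁⊗E₂ is a conditional expectation:
    (E12 1 = 1) ∧
    (∀ Y : Matrix (Fin a × Fin b) (Fin a × Fin b) ℂ, Y.PosSemidef → (E12 Y).PosSemidef) ∧
    (∀ C₁ ∈ N₁, ∀ C₂ ∈ N₂, ∀ D₁ ∈ N₁, ∀ D₂ ∈ N₂,
      ∀ Y : Matrix (Fin a × Fin b) (Fin a × Fin b) ℂ,
      E12 ((C₁ ⊗ₖ C₂) * Y * (D₁ ⊗ₖ D₂)) = (C₁ ⊗ₖ C₂) * E12 Y * (D₁ ⊗ₖ D₂)) ∧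
    (∀ Y ∈ Set.range (fun p : N₁ × N₂ => (p.1 : Matrix (Fin a) (Fin a) ℂ) ⊗ₖ (p.2 : Matrix (Fin b) (Fin b) ℂ)), E12 Y = Y) ∧
    -- the Pimsner–Popa bound with constant λ₁λ₂:
    (∀ Y : Matrix (Fin a × Fin b) (Fin a × Fin b) ℂ, Y.PosSemidef →
      (E12 Y - ((lam₁ * lam₂ : ℝ) : ℂ) • Y).PosSemidef) :=
  stmt17_general N₁ N₂ E₁ E₂ h1one h2one h1fix h2fix h1bimod h2bimod h1cp h2cp lam₁ lam₂ hl₁ h1gap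
    h2gap E12 hE12
end
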